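/- The normalized volume ratio (V(SU(n+1))/V(SU(n)))^{1/(2n+1)} is asymptotic to (2πe/n)^{1/2} as n → ∞; in particular it tends to 0. -/

import Mathlib

open Real Filter Finset

/-- Macdonald volume of `SU(n)` with standard normalization. -/
noncomputable def VSU (n : ℕ) : ℝ :=
  Real.sqrt n * (2 * π) ^ (n * (n + 1) / 2 - 1) /
    ∏ i ∈ Finset.range (n - 1), ((Nat.factorial (i + 1) : ℝ))

/-!
By the product formula, `V(SU(n+1)) / V(SU(n)) = √((n+1)/n) (2π)^(n+1) / n!`. Raising the
quotient of its `(2n+1)`-th root by `√(2πe/n)` to the power `2(2n+1)` and writing `n!` through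
Stirling's sequence `sₙ = n! / (√(2n) (n/e)^n)` leaves `π (n+1) / (e n sₙ²)`, which tends to
`1/e ≠ 0` because `sₙ → √π`. A nonnegative sequence whose `kₙ`-th powers, `kₙ → ∞`, converge to
a nonzero limit tends to `1`.
-/

open Nat Stirling Topology

theorem tendsto_nhds_one_of_tendsto_pow {α : Type*} {l : Filter α} {f : α → ℝ} {m : α → ℕ}
    {L : ℝ} (hf : ∀ᶠ a in l, 0 ≤ f a) (hm : Tendsto m l atTop)
    (hL : Tendsto (fun a ↦ f a ^ m a) l (𝓝 L)) (hL0 : L ≠ 0) : Tendsto f l (𝓝 1) := by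
  have hinv : Tendsto (fun a ↦ ((m a : ℝ))⁻¹) l (𝓝 0) :=
    tendsto_inv_atTop_zero.comp (tendsto_natCast_atTop_atTop.comp hm)
  have := hL.rpow hinv (.inl hL0)
  rw [rpow_zero] at this
  refine this.congr' ?_
  filter_upwards [hf, hm.eventually_ne_atTop 0] with a ha hma
  exact pow_rpow_inv_natCast ha hma

lemma triangle_succ_sub_one {n : ℕ} (hn : n ≠ 0) :
    (n + 1) * (n + 1 + 1) / 2 - 1 = n * (n + 1) / 2 - 1 + (n + 1) := by
  have h : (n + 1) * (n + 1 + 1) / 2 = n * (n + 1) / 2 + (n + 1) := by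
    rw [show (n + 1) * (n + 1 + 1) = n * (n + 1) + 2 * (n + 1) by ring,
      Nat.add_mul_div_left _ _ two_pos]
  have : 1 ≤ n * (n + 1) / 2 :=
    (Nat.le_div_iff_mul_le two_pos).2 (by nlinarith [Nat.one_le_iff_ne_zero.2 hn])
  omega

lemma VSU_nonneg (n : ℕ) : 0 ≤ VSU n := by
  unfold VSU
  positivity

lemma VSU_succ_div_VSU {n : ℕ} (hn : n ≠ 0) :
    VSU (n + 1) / VSU n = √((n + 1) / n) * (2 * π) ^ (n + 1) / n ! := by
  have hprod : ∏ i ∈ range (n + 1 - 1), ((i + 1)! : ℝ) =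
      (∏ i ∈ range (n - 1), ((i + 1)! : ℝ)) * n ! := by
    obtain ⟨k, rfl⟩ := Nat.exists_eq_succ_of_ne_zero hn
    simp [prod_range_succ]
  have hP : 0 < ∏ i ∈ range (n - 1), ((i + 1)! : ℝ) := prod_pos fun i _ ↦ by positivity
  have hn' : (0 : ℝ) < n := by positivity
  unfold VSU
  rw [triangle_succ_sub_one hn, hprod, pow_add, sqrt_div' _ hn'.le]
  push_cast
  field_simp

lemma factorial_sq_eq_stirlingSeq_sq {n : ℕ} (hn : n ≠ 0) :
    (n ! : ℝ) ^ 2 = stirlingSeq n ^ 2 * (2 * n) * (n / exp 1) ^ (2 * n) := by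
  have hn' : (0 : ℝ) < n := by positivity
  rw [stirlingSeq, div_pow, mul_pow, sq_sqrt (by positivity)]
  field_simp
  ring

lemma VSU_succ_div_rpow_div_sqrt_pow {n : ℕ} (hn : n ≠ 0) :
    ((VSU (n + 1) / VSU n) ^ ((1 : ℝ) / (2 * n + 1)) / √(2 * π * exp 1 / n)) ^ (2 * (2 * n + 1))
      = π / (exp 1 * stirlingSeq n ^ 2) * ((n + 1) / n) := by
  have hn' : (0 : ℝ) < n := by positivity
  have hR : 0 ≤ VSU (n + 1) / VSU n := by rw [VSU_succ_div_VSU hn]; positivity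
  have hroot : ((VSU (n + 1) / VSU n) ^ ((1 : ℝ) / (2 * n + 1))) ^ (2 * (2 * n + 1))
      = (VSU (n + 1) / VSU n) ^ 2 := by
    rw [← rpow_natCast, ← rpow_mul hR, ← rpow_two]
    congr 1
    push_cast
    field_simp
  have hs : stirlingSeq n ≠ 0 := ((sqrt_pos.2 pi_pos).trans_le (sqrt_pi_le_stirlingSeq hn)).ne'
  rw [div_pow, hroot, pow_mul, sq_sqrt (by positivity), VSU_succ_div_VSU hn, div_pow, mul_pow,
    sq_sqrt (by positivity), factorial_sq_eq_stirlingSeq_sq hn, div_pow, div_pow]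
  field_simp
  ring

lemma tendsto_pi_div_exp_mul_stirlingSeq_sq :
    Tendsto (fun n : ℕ ↦ π / (exp 1 * stirlingSeq n ^ 2) * ((n + 1) / n)) atTop
      (𝓝 (exp 1)⁻¹) := by
  have hsq : Tendsto (fun n ↦ stirlingSeq n ^ 2) atTop (𝓝 π) := by
    simpa [sq_sqrt pi_pos.le] using tendsto_stirlingSeq_sqrt_pi.pow 2
  have hfrac : Tendsto (fun n : ℕ ↦ ((n : ℝ) + 1) / n) atTop (𝓝 1) := by
    simpa using (tendsto_natCast_div_add_atTop (1 : ℝ)).inv₀ one_ne_zero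
  rw [show (exp 1)⁻¹ = π / (exp 1 * π) * 1 by field_simp]
  exact (tendsto_const_nhds.div (tendsto_const_nhds.mul hsq)
    (mul_ne_zero (exp_pos 1).ne' pi_pos.ne')).mul hfrac

/-- The normalized volume ratio `(V(SU(n+1))/V(SU(n)))^{1/(2n+1)}` is asymptotic to
`(2πe/n)^{1/2}` as `n → ∞`; in particular it tends to `0`. -/
theorem stmt5 :
    Tendsto (fun n : ℕ =>
        (VSU (n + 1) / VSU n) ^ ((1 : ℝ) / (2 * (n : ℝ) + 1)) /
          Real.sqrt (2 * π * Real.exp 1 / n)) atTop (nhds 1) ∧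
    Tendsto (fun n : ℕ => (VSU (n + 1) / VSU n) ^ ((1 : ℝ) / (2 * (n : ℝ) + 1)))
      atTop (nhds 0) := by
  have hpow := tendsto_pi_div_exp_mul_stirlingSeq_sq.congr' <|
    (eventually_ne_atTop 0).mono fun n hn ↦ (VSU_succ_div_rpow_div_sqrt_pow hn).symm
  have hasymp := tendsto_nhds_one_of_tendsto_pow
    (.of_forall fun n ↦ by have := VSU_nonneg n; have := VSU_nonneg (n + 1); positivity)
    (tendsto_atTop_mono (fun n ↦ by simp only [id]; omega) tendsto_id) hpow (by positivity)
  refine ⟨hasymp, ?_⟩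
  have hsqrt : Tendsto (fun n : ℕ ↦ √(2 * π * exp 1 / n)) atTop (𝓝 0) := by
    simpa using (tendsto_const_div_atTop_nhds_zero_nat _).sqrt
  simpa using (hasymp.mul hsqrt).congr' <| (eventually_ne_atTop 0).mono fun n hn ↦
    div_mul_cancel₀ _ (by positivity)
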